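/- Let λ be a partition of n = p + q such that all parts of λ have the same parity (all odd or all even), and assume syd(λ;p,q) ≠ ∅. Then the graph Γ(λ;p,q) is connected. -/

import Mathlib

open Finset

/-- A partition of `n`, given by the function `l` listing its parts in weakly
decreasing order: `l j = λ_j` is the `j`-th part for `1 ≤ j ≤ len`, and
`l j = 0` for `j > len`. -/
structure PartitionData : Type where
  l : ℕ → ℕ
  len : ℕ
  anti : ∀ j, 1 ≤ j → l (j + 1) ≤ l j
  pos : ∀ j, 1 ≤ j → (0 < l j ↔ j ≤ len)

namespace PartitionData

/-- The multiplicity `m(i)` of `i` as a part of the partition. -/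
def mult (P : PartitionData) (i : ℕ) : ℕ :=
  ((Finset.Icc 1 P.len).filter (fun j => P.l j = i)).card

/-- The finite set of (distinct) parts of the partition. -/
def partsSet (P : PartitionData) : Finset ℕ :=
  (Finset.Icc 1 P.len).image P.l

/-- The sum of the parts (i.e. the number `n` the partition partitions). -/
def boxSum (P : PartitionData) : ℕ := ∑ j ∈ Finset.Icc 1 P.len, P.l j

/-- The number of odd parts of the partition. -/
def oddCount (P : PartitionData) : ℕ :=
  ((Finset.Icc 1 P.len).filter (fun j => Odd (P.l j))).card

end PartitionData

/-- A signed Young diagram of shape `P` and signature `(p, q)`, encoded by the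
function `f` sending each part length `i` to `m_T⁺(i)`, the number of rows of
length `i` whose leading sign is `+`.  A row of length `i` with leading sign
`+` has `(i+1)/2` plus-boxes and `i/2` minus-boxes, and vice versa. -/
structure SYD (P : PartitionData) (p q : ℕ) : Type where
  f : ℕ → ℕ
  le_mult : ∀ i, f i ≤ P.mult i
  plus_eq : ∑ i ∈ P.partsSet, (f i * ((i + 1) / 2) + (P.mult i - f i) * (i / 2)) = p
  minus_eq : ∑ i ∈ P.partsSet, (f i * (i / 2) + (P.mult i - f i) * ((i + 1) / 2)) = q

/-- `i` and `j` are consecutive distinct parts: `i > j` with no part strictly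
in between (so if the distinct parts are `i_1 > ⋯ > i_k`, the pairs are
`(i_r, i_{r+1})`). -/
def Consec (P : PartitionData) (i j : ℕ) : Prop :=
  i ∈ P.partsSet ∧ j ∈ P.partsSet ∧ j < i ∧ ∀ x ∈ P.partsSet, ¬ (j < x ∧ x < i)

/-- `j` is the smallest part `i_k`. -/
def IsMinPart (P : PartitionData) (j : ℕ) : Prop :=
  j ∈ P.partsSet ∧ ∀ x ∈ P.partsSet, j ≤ x

/-- Adjacency of signed Young diagrams with step `c`:
`π(T) - π(T') ∈ {±c(e_r - e_{r+1})} ∪ {±c e_k}` in the coordinates indexed by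
the distinct parts `i_1 > ⋯ > i_k`. -/
def AdjRel (P : PartitionData) {p q : ℕ} (c : ℕ) (T T' : SYD P p q) : Prop :=
  (∃ i j, Consec P i j ∧ (∀ x, x ≠ i → x ≠ j → T.f x = T'.f x) ∧
    ((T.f i = T'.f i + c ∧ T'.f j = T.f j + c) ∨
      (T'.f i = T.f i + c ∧ T.f j = T'.f j + c)))
  ∨ (∃ j, IsMinPart P j ∧ (∀ x, x ≠ j → T.f x = T'.f x) ∧
      (T.f j = T'.f j + c ∨ T'.f j = T.f j + c))

/-- The orbit graph `Γ(λ;p,q)` (type AIII). -/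
def orbitGraph (P : PartitionData) (p q : ℕ) : SimpleGraph (SYD P p q) :=
  SimpleGraph.fromRel (AdjRel P 1)

/-!
A `+`-led row of odd length carries one more `+` box than a `−`-led one, while for even length
the two carry the same, so the signature only fixes the number of `+`-led rows of odd length.
Hence, when all parts have the same parity, sliding a `+` lead from a row length to the next
smaller one is an edge of the graph, and when all parts are even so is dropping a `+` lead at the
smallest length. These moves lower the potential `∑ m⁺(i) (i + 1)`, so every diagram is joined to
one where no move applies. For odd parts such a diagram puts its `+` leads on the smallest lengths
first and is determined by their total number, which is fixed; for even parts it has no `+` lead.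
-/

namespace SimpleGraph

variable {V : Type*} {G : SimpleGraph V}

theorem exists_mem_reachable_of_descent (φ : V → ℕ) {S : Set V}
    (h : ∀ v ∉ S, ∃ w, G.Adj v w ∧ φ w < φ v) (v : V) : ∃ w ∈ S, G.Reachable v w := by
  induction hv : φ v using Nat.strong_induction_on generalizing v with
  | _ n ih =>
    by_cases hvS : v ∈ S
    · exact ⟨v, hvS, .rfl⟩
    obtain ⟨w, hvw, hlt⟩ := h v hvS
    obtain ⟨u, huS, hwu⟩ := ih (φ w) (hv ▸ hlt) w rfl
    exact ⟨u, huS, hvw.reachable.trans hwu⟩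

theorem connected_of_descent [Nonempty V] (φ : V → ℕ) {S : Set V} (hS : S.Subsingleton)
    (h : ∀ v ∉ S, ∃ w, G.Adj v w ∧ φ w < φ v) : G.Connected := by
  refine ⟨fun u v => ?_⟩
  obtain ⟨u', hu'S, hu⟩ := exists_mem_reachable_of_descent φ h u
  obtain ⟨v', hv'S, hv⟩ := exists_mem_reachable_of_descent φ h v
  exact hu.trans (hS hu'S hv'S ▸ hv.symm)

end SimpleGraph

theorem Finset.sum_mul_add_of_add_ite_eq_add_ite {ι R : Type*} [DecidableEq ι] [Semiring R]
    {s : Finset ι} {f g w : ι → R} {i j : ι}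
    (hi : i ∈ s) (hj : j ∈ s)
    (h : ∀ x, g x + (if x = i then 1 else 0) = f x + (if x = j then 1 else 0)) :
    ∑ x ∈ s, g x * w x + w i = ∑ x ∈ s, f x * w x + w j := by
  have key : ∑ x ∈ s, (g x + (if x = i then 1 else 0)) * w x
      = ∑ x ∈ s, (f x + (if x = j then 1 else 0)) * w x := by simp only [h]
  simpa [add_mul, Finset.sum_add_distrib, hi, hj] using key

theorem Finset.sum_mul_add_of_add_ite_eq {ι R : Type*} [DecidableEq ι] [Semiring R]
    {s : Finset ι} {f g w : ι → R} {j : ι}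
    (hj : j ∈ s) (h : ∀ x, g x + (if x = j then 1 else 0) = f x) :
    ∑ x ∈ s, g x * w x + w j = ∑ x ∈ s, f x * w x := by
  have key : ∑ x ∈ s, (g x + (if x = j then 1 else 0)) * w x = ∑ x ∈ s, f x * w x := by
    simp only [h]
  simpa [add_mul, Finset.sum_add_distrib, hj] using key

theorem plus_boxes_eq {c m x : ℕ} (h : c ≤ m) :
    c * ((x + 1) / 2) + (m - c) * (x / 2) = m * (x / 2) + c * (x % 2) := by
  obtain ⟨d, rfl⟩ := Nat.exists_eq_add_of_le h
  rw [show (x + 1) / 2 = x / 2 + x % 2 by omega, Nat.add_sub_cancel_left]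
  ring

theorem plus_boxes_add_minus_boxes {c m x : ℕ} (h : c ≤ m) :
    c * ((x + 1) / 2) + (m - c) * (x / 2) + (c * (x / 2) + (m - c) * ((x + 1) / 2)) = m * x := by
  obtain ⟨d, rfl⟩ := Nat.exists_eq_add_of_le h
  rw [Nat.add_sub_cancel_left]
  calc _ = (c + d) * ((x + 1) / 2 + x / 2) := by ring
    _ = (c + d) * x := by rw [show (x + 1) / 2 + x / 2 = x by omega]

namespace PartitionData

variable (P : PartitionData)

theorem forall_mem_partsSet {Q : ℕ → Prop} :
    (∀ x ∈ P.partsSet, Q x) ↔ ∀ j, 1 ≤ j → j ≤ P.len → Q (P.l j) := by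
  simp only [partsSet, Finset.forall_mem_image, Finset.mem_Icc, and_imp]

theorem mult_pos {i : ℕ} (hi : i ∈ P.partsSet) : 0 < P.mult i := by
  obtain ⟨j, hj, rfl⟩ := Finset.mem_image.mp hi
  exact Finset.card_pos.mpr ⟨j, Finset.mem_filter.mpr ⟨hj, rfl⟩⟩

theorem mult_eq_zero {i : ℕ} (hi : i ∉ P.partsSet) : P.mult i = 0 := by
  rw [mult, Finset.card_eq_zero, Finset.filter_eq_empty_iff]
  exact fun j hj hji => hi (Finset.mem_image.mpr ⟨j, hj, hji⟩)

theorem exists_consec_of_lt {x y : ℕ} (hy : y ∈ P.partsSet) (hx : x ∈ P.partsSet)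
    (hxy : x < y) : ∃ j, Consec P y j ∧ x ≤ j := by
  set S := P.partsSet.filter (· < y)
  have hxS : x ∈ S := Finset.mem_filter.mpr ⟨hx, hxy⟩
  obtain ⟨hjP, hjy⟩ := Finset.mem_filter.mp (S.max'_mem ⟨x, hxS⟩)
  refine ⟨S.max' ⟨x, hxS⟩, ⟨hy, hjP, hjy, ?_⟩, S.le_max' x hxS⟩
  rintro z hz ⟨hjz, hzy⟩
  exact absurd (S.le_max' z (Finset.mem_filter.mpr ⟨hz, hzy⟩)) (not_le.mpr hjz)

end PartitionData

namespace SYD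

open PartitionData

variable {P : PartitionData} {p q : ℕ}

theorem ext {T T' : SYD P p q} (h : T.f = T'.f) : T = T' := by
  cases T; cases T'; simp_all

theorem f_eq_zero (T : SYD P p q) {i : ℕ} (hi : i ∉ P.partsSet) : T.f i = 0 :=
  Nat.le_zero.mp (P.mult_eq_zero hi ▸ T.le_mult i)

theorem sum_plus_boxes {f : ℕ → ℕ} (hf : ∀ x, f x ≤ P.mult x) :
    ∑ x ∈ P.partsSet, (f x * ((x + 1) / 2) + (P.mult x - f x) * (x / 2))
      = ∑ x ∈ P.partsSet, P.mult x * (x / 2) + ∑ x ∈ P.partsSet, f x * (x % 2) := by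
  rw [← Finset.sum_add_distrib]
  exact Finset.sum_congr rfl fun x _ => plus_boxes_eq (hf x)

theorem sum_plus_boxes_add_sum_minus_boxes {f : ℕ → ℕ} (hf : ∀ x, f x ≤ P.mult x) :
    ∑ x ∈ P.partsSet, (f x * ((x + 1) / 2) + (P.mult x - f x) * (x / 2))
      + ∑ x ∈ P.partsSet, (f x * (x / 2) + (P.mult x - f x) * ((x + 1) / 2))
      = ∑ x ∈ P.partsSet, P.mult x * x := by
  rw [← Finset.sum_add_distrib]
  exact Finset.sum_congr rfl fun x _ => plus_boxes_add_minus_boxes (hf x)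

/-- Only the number of `+`-led rows of odd length enters the signature. -/
theorem sum_f_mul_mod_two_eq (T T' : SYD P p q) :
    ∑ x ∈ P.partsSet, T.f x * (x % 2) = ∑ x ∈ P.partsSet, T'.f x * (x % 2) := by
  have h := sum_plus_boxes T.le_mult
  have h' := sum_plus_boxes T'.le_mult
  rw [T.plus_eq] at h
  rw [T'.plus_eq] at h'
  omega

def withF (T : SYD P p q) (g : ℕ → ℕ) (hg : ∀ x, g x ≤ P.mult x)
    (hodd : ∑ x ∈ P.partsSet, g x * (x % 2) = ∑ x ∈ P.partsSet, T.f x * (x % 2)) :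
    SYD P p q where
  f := g
  le_mult := hg
  plus_eq := by rw [sum_plus_boxes hg, hodd, ← sum_plus_boxes T.le_mult, T.plus_eq]
  minus_eq := by
    have h := sum_plus_boxes_add_sum_minus_boxes hg
    have hT := sum_plus_boxes_add_sum_minus_boxes T.le_mult
    rw [T.plus_eq, T.minus_eq] at hT
    rw [sum_plus_boxes hg, hodd, ← sum_plus_boxes T.le_mult, T.plus_eq] at h
    omega

@[simp]
theorem withF_f (T : SYD P p q) (g : ℕ → ℕ) (hg hodd) : (T.withF g hg hodd).f = g := rfl

def potential (T : SYD P p q) : ℕ := ∑ x ∈ P.partsSet, T.f x * (x + 1)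

theorem exists_adj_potential_lt_of_consec (T : SYD P p q) {i j : ℕ} (hij : Consec P i j)
    (hmod : i % 2 = j % 2) (hi : 0 < T.f i) (hj : T.f j < P.mult j) :
    ∃ T', (orbitGraph P p q).Adj T T' ∧ T'.potential < T.potential := by
  obtain ⟨hiP, hjP, hji, -⟩ := id hij
  set g : ℕ → ℕ := fun x => T.f x + (if x = j then 1 else 0) - (if x = i then 1 else 0) with hg
  have hmove : ∀ x, g x + (if x = i then 1 else 0) = T.f x + (if x = j then 1 else 0) := by
    intro x
    simp only [hg]
    split_ifs <;> subst_vars <;> omega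
  have hgj : g j = T.f j + 1 := by simp [hg, hji.ne]
  refine ⟨T.withF g (fun x => ?_) ?_, ?_, ?_⟩
  · have := T.le_mult x
    simp only [hg]
    split_ifs <;> subst_vars <;> omega
  · have := Finset.sum_mul_add_of_add_ite_eq_add_ite hiP hjP (w := (· % 2)) hmove
    omega
  · refine (SimpleGraph.fromRel_adj _ _ _).mpr ⟨fun h => ?_, Or.inl (Or.inl ⟨i, j, hij, ?_, Or.inl ⟨?_, hgj⟩⟩)⟩
    · have := congrArg (f · j) h
      simp only [withF_f, hgj] at this
      omega
    · intro x hxi hxj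
      simp [hg, hxi, hxj]
    · simp [hg, hji.ne']
      omega
  · have := Finset.sum_mul_add_of_add_ite_eq_add_ite hiP hjP (w := (· + 1)) hmove
    simp only [potential, withF_f]
    omega

theorem exists_adj_potential_lt_of_isMinPart (T : SYD P p q) {j : ℕ} (hj : IsMinPart P j)
    (hmod : j % 2 = 0) (hfj : 0 < T.f j) :
    ∃ T', (orbitGraph P p q).Adj T T' ∧ T'.potential < T.potential := by
  set g : ℕ → ℕ := fun x => T.f x - (if x = j then 1 else 0) with hg
  have hmove : ∀ x, g x + (if x = j then 1 else 0) = T.f x := by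
    intro x
    simp only [hg]
    split_ifs <;> subst_vars <;> omega
  have hgj : T.f j = g j + 1 := by simp [hg]; omega
  refine ⟨T.withF g (fun x => (Nat.sub_le _ _).trans (T.le_mult x)) ?_, ?_, ?_⟩
  · have := Finset.sum_mul_add_of_add_ite_eq hj.1 (w := (· % 2)) hmove
    omega
  · refine (SimpleGraph.fromRel_adj _ _ _).mpr ⟨fun h => ?_, Or.inl (Or.inr ⟨j, hj, ?_, Or.inl hgj⟩)⟩
    · have := congrArg (f · j) h
      simp only [withF_f] at this
      omega
    · intro x hxj
      simp [hg, hxj]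
  · have := Finset.sum_mul_add_of_add_ite_eq hj.1 (w := (· + 1)) hmove
    simp only [potential, withF_f]
    omega

/-- No `+` lead can slide from a row length to the next smaller one. -/
def IsSettled (T : SYD P p q) : Prop :=
  ∀ i j, Consec P i j → T.f i = 0 ∨ T.f j = P.mult j

theorem exists_adj_potential_lt_of_not_isSettled (T : SYD P p q)
    (hmod : ∀ i j, Consec P i j → i % 2 = j % 2) (hT : ¬ T.IsSettled) :
    ∃ T', (orbitGraph P p q).Adj T T' ∧ T'.potential < T.potential := by
  simp only [IsSettled, not_forall, not_or] at hT
  obtain ⟨i, j, hij, hi, hj⟩ := hT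
  exact T.exists_adj_potential_lt_of_consec hij (hmod i j hij) (Nat.pos_of_ne_zero hi)
    (lt_of_le_of_ne (T.le_mult j) hj)

theorem IsSettled.f_eq_zero_of_lt {T : SYD P p q} (hT : T.IsSettled) {x y : ℕ}
    (hx : x ∈ P.partsSet) (hfx : T.f x < P.mult x) (hy : y ∈ P.partsSet) (hxy : x < y) :
    T.f y = 0 := by
  induction y using Nat.strong_induction_on with
  | _ y ih =>
    obtain ⟨j, hyj, hxj⟩ := P.exists_consec_of_lt hy hx hxy
    refine (hT y j hyj).resolve_right fun hfj => ?_
    rcases hxj.eq_or_lt with rfl | hxj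
    · omega
    · have := P.mult_pos hyj.2.1
      have := ih j hyj.2.2.1 hyj.2.1 hxj
      omega

theorem IsSettled.sum_lt_sum {T T' : SYD P p q} (hT : T.IsSettled) (hT' : T'.IsSettled)
    {x : ℕ} (hx : x ∈ P.partsSet) (hlt : T.f x < T'.f x) :
    ∑ y ∈ P.partsSet, T.f y < ∑ y ∈ P.partsSet, T'.f y := by
  -- `T` has no `+` lead above `x` and `T'` is full below `x`, so `T ≤ T'` everywhere.
  refine Finset.sum_lt_sum (fun y hy => ?_) ⟨x, hx, hlt⟩
  rcases lt_trichotomy x y with hxy | rfl | hyx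
  · rw [hT.f_eq_zero_of_lt hx (hlt.trans_le (T'.le_mult x)) hy hxy]
    exact Nat.zero_le _
  · exact hlt.le
  · by_contra! h
    have := hT'.f_eq_zero_of_lt hy (h.trans_le (T.le_mult y)) hx hyx
    omega

theorem IsSettled.eq_of_sum_eq {T T' : SYD P p q} (hT : T.IsSettled) (hT' : T'.IsSettled)
    (hs : ∑ y ∈ P.partsSet, T.f y = ∑ y ∈ P.partsSet, T'.f y) : T = T' := by
  refine ext (funext fun x => ?_)
  by_cases hx : x ∈ P.partsSet
  · by_contra hne
    rcases lt_or_gt_of_ne hne with hlt | hlt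
    · exact (hT.sum_lt_sum hT' hx hlt).ne hs
    · exact (hT'.sum_lt_sum hT hx hlt).ne hs.symm
  · rw [T.f_eq_zero hx, T'.f_eq_zero hx]

theorem IsSettled.f_eq_zero {T : SYD P p q} (hT : T.IsSettled)
    (hmin : ∀ j, IsMinPart P j → T.f j = 0) (x : ℕ) : T.f x = 0 := by
  by_cases hx : x ∈ P.partsSet
  · set j := P.partsSet.min' ⟨x, hx⟩
    have hj : IsMinPart P j := ⟨P.partsSet.min'_mem _, fun y hy => P.partsSet.min'_le y hy⟩
    rcases (hj.2 x hx).eq_or_lt with hjx | hjx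
    · exact hjx ▸ hmin j hj
    · exact hT.f_eq_zero_of_lt hj.1 (hmin j hj ▸ P.mult_pos hj.1) hx hjx
  · exact T.f_eq_zero hx

theorem IsSettled.eq_of_forall_odd {T T' : SYD P p q} (hodd : ∀ x ∈ P.partsSet, x % 2 = 1)
    (hT : T.IsSettled) (hT' : T'.IsSettled) : T = T' := by
  have hsum (T : SYD P p q) : ∑ x ∈ P.partsSet, T.f x * (x % 2) = ∑ x ∈ P.partsSet, T.f x :=
    Finset.sum_congr rfl fun x hx => by rw [hodd x hx, mul_one]
  exact hT.eq_of_sum_eq hT' (by rw [← hsum, ← hsum, T.sum_f_mul_mod_two_eq T'])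

theorem exists_adj_potential_lt_of_forall_even (T : SYD P p q)
    (heven : ∀ x ∈ P.partsSet, x % 2 = 0) {x : ℕ} (hx : T.f x ≠ 0) :
    ∃ T', (orbitGraph P p q).Adj T T' ∧ T'.potential < T.potential := by
  by_cases hT : T.IsSettled
  · obtain ⟨j, hj, hfj⟩ : ∃ j, IsMinPart P j ∧ T.f j ≠ 0 := by
      by_contra! h
      exact hx (hT.f_eq_zero h x)
    exact T.exists_adj_potential_lt_of_isMinPart hj (heven j hj.1) (Nat.pos_of_ne_zero hfj)
  · exact T.exists_adj_potential_lt_of_not_isSettled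
      (fun i j hij => (heven i hij.1).trans (heven j hij.2.1).symm) hT

end SYD

theorem stmt12_general (P : PartitionData) (p q : ℕ)
    (hne : Nonempty (SYD P p q))
    (hpar : (∀ j, 1 ≤ j → j ≤ P.len → Odd (P.l j)) ∨
      (∀ j, 1 ≤ j → j ≤ P.len → Even (P.l j))) :
    (orbitGraph P p q).Connected := by
  replace hpar : (∀ x ∈ P.partsSet, x % 2 = 1) ∨ ∀ x ∈ P.partsSet, x % 2 = 0 := by
    simpa only [P.forall_mem_partsSet, Nat.odd_iff, Nat.even_iff] using hpar
  rcases hpar with hodd | heven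
  · exact SimpleGraph.connected_of_descent SYD.potential (S := {T | T.IsSettled})
      (fun T hT T' hT' => hT.eq_of_forall_odd hodd hT')
      (fun T hT => T.exists_adj_potential_lt_of_not_isSettled
        (fun i j hij => (hodd i hij.1).trans (hodd j hij.2.1).symm) hT)
  · refine SimpleGraph.connected_of_descent SYD.potential (S := {T | ∀ x, T.f x = 0})
      (fun T hT T' hT' => SYD.ext (funext fun x => (hT x).trans (hT' x).symm))
      (fun T hT => ?_)
    obtain ⟨x, hx⟩ := not_forall.mp hT
    exact T.exists_adj_potential_lt_of_forall_even heven hx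

/-- If all parts of `λ` have the same parity (all odd or all even), and
`syd(λ;p,q) ≠ ∅`, then `Γ(λ;p,q)` is connected. -/
theorem stmt12 (P : PartitionData) (p q : ℕ)
    (hn : P.boxSum = p + q) (hne : Nonempty (SYD P p q))
    (hpar : (∀ j, 1 ≤ j → j ≤ P.len → Odd (P.l j)) ∨
      (∀ j, 1 ≤ j → j ≤ P.len → Even (P.l j))) :
    (orbitGraph P p q).Connected :=
  stmt12_general P p q hne hpar
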